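/- arXiv:1608.03908 — 8 statements merged into one kernel-verified Lean document; each statement's English description precedes it below -/
import Mathlib

section
/- Let vcc be real and g1, g2, g3, s > 0 with g1·g2 > g3. Then the non-monotone characteristic f(v) = g2·(vcc − clamp_{[0,s]}(g1·(v − 0.6))) + g3·v has a strict local maximum at v = 0.6 (i.e., there is a punctured neighborhood of 0.6 on which f(v) < f(0.6)), and its value there is f(0.6) = g2·vcc + 0.6·g3. -/
/-- The clamp (metric projection onto `[0, s]`) function. -/
noncomputable def clamp (s v : ℝ) : ℝ := min (max v 0) s

/-- The non-monotone circuit characteristic, eq. (5) of the paper. -/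
noncomputable def nonMonotone (vcc g1 g2 g3 s v : ℝ) : ℝ :=
  g2 * (vcc - clamp s (g1 * (v - 0.6))) + g3 * v

lemma value_at (vcc g1 g2 g3 s : ℝ) (hs : 0 < s) :
    nonMonotone vcc g1 g2 g3 s 0.6 = g2 * vcc + 0.6 * g3 := by
  unfold nonMonotone clamp
  norm_num [min_eq_left hs.le]
  ring

/-- with `g1·g2 > g3`, the non-monotone characteristic has a strict local
maximum at `v = 0.6`, with value `g2·vcc + 0.6·g3`. -/
theorem stmt0 (vcc g1 g2 g3 s : ℝ) (hg1 : 0 < g1) (hg2 : 0 < g2) (hg3 : 0 < g3)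
    (hs : 0 < s) (h : g1 * g2 > g3) :
    (∃ ε > 0, ∀ v : ℝ, v ≠ 0.6 → |v - 0.6| < ε →
      nonMonotone vcc g1 g2 g3 s v < nonMonotone vcc g1 g2 g3 s 0.6) ∧
    nonMonotone vcc g1 g2 g3 s 0.6 = g2 * vcc + 0.6 * g3 := by
  refine ⟨⟨s / g1, div_pos hs hg1, fun v hv hve => ?_⟩, value_at vcc g1 g2 g3 s hs⟩
  rw [value_at vcc g1 g2 g3 s hs]
  rw [abs_lt] at hve
  unfold nonMonotone clamp
  rcases lt_or_gt_of_ne hv with h1 | h1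
  · have hneg : g1 * (v - 0.6) ≤ 0 := mul_nonpos_of_nonneg_of_nonpos hg1.le (by linarith)
    rw [max_eq_right hneg, min_eq_left hs.le]
    nlinarith
  · have hpos : 0 ≤ g1 * (v - 0.6) := mul_nonneg hg1.le (by linarith)
    have hle : g1 * (v - 0.6) ≤ s := by
      have := hve.2
      rw [lt_div_iff₀ hg1] at this
      nlinarith
    rw [max_eq_left hpos, min_eq_left hle]
    nlinarith
end

section
/- Let vcc be real and g1, g2, s > 0 and suppose g1·g2 < g3. Then the characteristic f(v) = g2·(vcc − clamp_{[0,s]}(g1·(v − 0.6))) + g3·v is strictly monotone increasing on all of ℝ. -/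
lemma clamp_lip (s x y : ℝ) (h : y ≤ x) : clamp s x - clamp s y ≤ x - y := by
  unfold clamp
  rcases le_total (max x 0) s with h1 | h1 <;> rcases le_total (max y 0) s with h2 | h2 <;>
    rcases le_total x 0 with h3 | h3 <;> rcases le_total y 0 with h4 | h4 <;>
    simp [min_def, max_def, *] <;> split_ifs <;> linarith

/-- if `g1·g2 < g3`, the characteristic is strictly monotone increasing on ℝ. -/
theorem stmt2 (vcc g1 g2 g3 s : ℝ) (hg1 : 0 < g1) (hg2 : 0 < g2) (hs : 0 < s)
    (h : g1 * g2 < g3) :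
    StrictMono (nonMonotone vcc g1 g2 g3 s) := by
  intro a b hab
  have hlip := clamp_lip s (g1 * (b - 0.6)) (g1 * (a - 0.6))
    (by nlinarith)
  unfold nonMonotone
  nlinarith [mul_le_mul_of_nonneg_left hlip hg2.le]
end

section
/- Let vcc, g7 be real, g6 > 0 and s ≥ 0. Then the two singular (fold) points of the closed-loop hysteresis characteristic lie on the curve F = 0; precisely, F(w1, vcc) = 0 and F(w2, vcc − s) = 0, where w1 = (g7·(vcc − 0.6))/g6 + 0.6 and w2 = w1 − ((g7 − 1)/g6)·s. -/
/-- The closed-loop hysteresis characteristic, eq. (8) of the paper. -/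
noncomputable def hyst (vcc g6 g7 s w x : ℝ) : ℝ :=
  x - vcc + clamp s (g6 * (w - 0.6) - g7 * (x - 0.6))

/-- the two singular (fold) points of the closed-loop hysteresis lie on the
curve `F = 0`: `F(w1, vcc) = 0` and `F(w2, vcc − s) = 0`. -/
theorem stmt6 (vcc g7 g6 s : ℝ) (hg6 : 0 < g6) (hs : 0 ≤ s) :
    hyst vcc g6 g7 s (g7 * (vcc - 0.6) / g6 + 0.6) vcc = 0 ∧
    hyst vcc g6 g7 s
      ((g7 * (vcc - 0.6) / g6 + 0.6) - ((g7 - 1) / g6) * s) (vcc - s) = 0 := by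
  have hg6' : g6 ≠ 0 := ne_of_gt hg6
  constructor
  · have h : g6 * (g7 * (vcc - 0.6) / g6 + 0.6 - 0.6) - g7 * (vcc - 0.6) = 0 := by
      field_simp; ring
    simp only [hyst, clamp]
    rw [show g6 * (g7 * (vcc - 0.6) / g6 + 0.6 - 0.6) - g7 * (vcc - 0.6) = 0 from h]
    simp [hs]
  · have h : g6 * ((g7 * (vcc - 0.6) / g6 + 0.6) - ((g7 - 1) / g6) * s - 0.6)
        - g7 * (vcc - s - 0.6) = s := by
      field_simp; ring
    simp only [hyst, clamp]
    rw [h]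
    simp [hs]
end

section
/- Let vcc be real, g6 > 0, g7 > 1, s > 0, and let w satisfy w2 < w < w1, where w1 = (g7·(vcc − 0.6))/g6 + 0.6 and w2 = w1 − ((g7 − 1)/g6)·s. Then the equation F(w, x) = 0 has exactly three solutions x ∈ ℝ, namely x = vcc, x = vcc − s, and the middle solution x_m = (vcc − g6·(w − 0.6) − 0.6·g7)/(1 − g7); moreover these three solutions are pairwise distinct and satisfy vcc − s < x_m < vcc. -/
/-- for a bistable input `w2 < w < w1`, the equation `F(w, x) = 0` has exactly
three solutions: `vcc`, `vcc − s` and the middle solution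
`x_m = (vcc − g6·(w − 0.6) − 0.6·g7)/(1 − g7)`, which are pairwise distinct and satisfy
`vcc − s < x_m < vcc`. -/
theorem stmt7 (vcc g6 g7 s w : ℝ) (hg6 : 0 < g6) (hg7 : 1 < g7) (hs : 0 < s)
    (hw2 : (g7 * (vcc - 0.6) / g6 + 0.6) - ((g7 - 1) / g6) * s < w)
    (hw1 : w < g7 * (vcc - 0.6) / g6 + 0.6) :
    (∀ x : ℝ, hyst vcc g6 g7 s w x = 0 ↔
      (x = vcc ∨ x = vcc - s ∨ x = (vcc - g6 * (w - 0.6) - 0.6 * g7) / (1 - g7))) ∧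
    vcc ≠ vcc - s ∧
    vcc ≠ (vcc - g6 * (w - 0.6) - 0.6 * g7) / (1 - g7) ∧
    vcc - s ≠ (vcc - g6 * (w - 0.6) - 0.6 * g7) / (1 - g7) ∧
    vcc - s < (vcc - g6 * (w - 0.6) - 0.6 * g7) / (1 - g7) ∧
    (vcc - g6 * (w - 0.6) - 0.6 * g7) / (1 - g7) < vcc := by
  have hne : (1 : ℝ) - g7 ≠ 0 := by linarith
  have hneg : (1 : ℝ) - g7 < 0 := by linarith
  -- clear denominators in the hypotheses
  have h1 : g6 * (w - 0.6) < g7 * (vcc - 0.6) := by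
    have h := (lt_div_iff₀ hg6).mp (by linarith : w - 0.6 < g7 * (vcc - 0.6) / g6)
    linarith
  have h2 : g7 * (vcc - 0.6) - (g7 - 1) * s < g6 * (w - 0.6) := by
    have h := (div_lt_iff₀ hg6).mp
      (by
        have : (g7 * (vcc - 0.6) - (g7 - 1) * s) / g6
            = g7 * (vcc - 0.6) / g6 - ((g7 - 1) / g6) * s := by ring
        rw [this]; linarith : (g7 * (vcc - 0.6) - (g7 - 1) * s) / g6 < w - 0.6)
    linarith
  set xm : ℝ := (vcc - g6 * (w - 0.6) - 0.6 * g7) / (1 - g7) with hxm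
  have hxmv : xm * (1 - g7) = vcc - g6 * (w - 0.6) - 0.6 * g7 := by
    rw [hxm, div_mul_cancel₀ _ hne]
  have hlt1 : xm < vcc := by
    rw [hxm, div_lt_iff_of_neg hneg]; nlinarith
  have hlt2 : vcc - s < xm := by
    rw [hxm, lt_div_iff_of_neg hneg]; nlinarith
  refine ⟨?_, by intro h; linarith, by intro h; linarith, by intro h; linarith, hlt2, hlt1⟩
  intro x
  unfold hyst clamp
  constructor
  · intro h
    rcases le_total (g6 * (w - 0.6) - g7 * (x - 0.6)) 0 with h0 | h0
    · left
      rw [max_eq_right h0, min_eq_left hs.le] at h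
      linarith
    · rw [max_eq_left h0] at h
      rcases le_total s (g6 * (w - 0.6) - g7 * (x - 0.6)) with hst | hst
      · right; left
        rw [min_eq_right hst] at h
        linarith
      · right; right
        rw [min_eq_left hst] at h
        rw [hxm, eq_div_iff hne]
        linarith [h]
        -- x * (1 - g7) = vcc - g6*(w-0.6) - 0.6*g7
  · rintro (rfl | rfl | rfl)
    · rw [max_eq_right (by linarith), min_eq_left hs.le]; ring
    · rw [max_eq_left (by nlinarith), min_eq_right (by nlinarith)]; ring
    · rw [max_eq_left (by nlinarith [hxmv]), min_eq_left (by nlinarith [hxmv])]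
      nlinarith [hxmv]
end

section
/- Let vcc be real, g6 > 0, g7 > 1, s > 0, and set w1 = (g7·(vcc − 0.6))/g6 + 0.6 and w2 = w1 − ((g7 − 1)/g6)·s. If w < w2 then the equation F(w, x) = 0 has the unique solution x = vcc, and if w > w1 then it has the unique solution x = vcc − s (outside the bistable input range the hysteresis characteristic is single-valued). -/
/-- outside the bistable input range the hysteresis characteristic is
single-valued: for `w < w2` the unique solution of `F(w, x) = 0` is `x = vcc`, and for
`w > w1` it is `x = vcc − s`. -/
theorem stmt8 (vcc g6 g7 s : ℝ) (hg6 : 0 < g6) (hg7 : 1 < g7) (hs : 0 < s) :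
    (∀ w : ℝ, w < (g7 * (vcc - 0.6) / g6 + 0.6) - ((g7 - 1) / g6) * s →
      ∀ x : ℝ, hyst vcc g6 g7 s w x = 0 ↔ x = vcc) ∧
    (∀ w : ℝ, w > g7 * (vcc - 0.6) / g6 + 0.6 →
      ∀ x : ℝ, hyst vcc g6 g7 s w x = 0 ↔ x = vcc - s) := by
  constructor
  · intro w hw x
    have hw' : g6 * (w - 0.6) < g7 * (vcc - 0.6) - (g7 - 1) * s := by
      have h1 : g7 * (vcc - 0.6) / g6 * g6 = g7 * (vcc - 0.6) :=
        div_mul_cancel₀ _ (ne_of_gt hg6)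
      have h2 : (g7 - 1) / g6 * g6 = g7 - 1 := div_mul_cancel₀ _ (ne_of_gt hg6)
      nlinarith [mul_lt_mul_of_pos_right hw hg6]
    simp only [hyst, clamp]
    constructor
    · intro h
      rcases max_cases (g6 * (w - 0.6) - g7 * (x - 0.6)) 0 with ⟨h1, h2⟩ | ⟨h1, h2⟩ <;>
        rw [h1] at h <;>
        rcases min_cases (g6 * (w - 0.6) - g7 * (x - 0.6)) s with ⟨h3, h4⟩ | ⟨h3, h4⟩ <;>
        simp [min_eq_left hs.le, min_eq_right hs.le, h3] at h <;>
        nlinarith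
    · intro hx
      rw [hx]
      have harg : g6 * (w - 0.6) - g7 * (vcc - 0.6) ≤ 0 := by nlinarith
      rw [max_eq_right harg, min_eq_left hs.le]
      ring
  · intro w hw x
    have hw' : g6 * (w - 0.6) > g7 * (vcc - 0.6) := by
      have h1 : g7 * (vcc - 0.6) / g6 * g6 = g7 * (vcc - 0.6) :=
        div_mul_cancel₀ _ (ne_of_gt hg6)
      nlinarith [mul_lt_mul_of_pos_right hw hg6]
    simp only [hyst, clamp]
    constructor
    · intro h
      rcases max_cases (g6 * (w - 0.6) - g7 * (x - 0.6)) 0 with ⟨h1, h2⟩ | ⟨h1, h2⟩ <;>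
        rw [h1] at h <;>
        rcases min_cases (g6 * (w - 0.6) - g7 * (x - 0.6)) s with ⟨h3, h4⟩ | ⟨h3, h4⟩ <;>
        simp [min_eq_left hs.le, min_eq_right hs.le, h3] at h <;>
        nlinarith
    · intro hx
      rw [hx]
      have harg : s ≤ g6 * (w - 0.6) - g7 * (vcc - s - 0.6) := by nlinarith
      have h0 : (0:ℝ) ≤ g6 * (w - 0.6) - g7 * (vcc - s - 0.6) := le_trans hs.le harg
      rw [max_eq_left h0, min_eq_right harg]
      ring
end

section
/- Let vcc be real, g6 > 0, g7 > 1, s > 0, and set w1 = (g7·(vcc − 0.6))/g6 + 0.6 and w2 = w1 − ((g7 − 1)/g6)·s. Then at each of the two fold inputs the equation F = 0 has exactly two solutions: {x ∈ ℝ : F(w1, x) = 0} = {vcc − s, vcc} and {x ∈ ℝ : F(w2, x) = 0} = {vcc − s, vcc}. -/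
/-- at each of the two fold inputs `w1` and `w2`, the equation `F = 0` has
exactly the two solutions `vcc − s` and `vcc`. -/
theorem stmt9 (vcc g6 g7 s : ℝ) (hg6 : 0 < g6) (hg7 : 1 < g7) (hs : 0 < s) :
    {x : ℝ | hyst vcc g6 g7 s (g7 * (vcc - 0.6) / g6 + 0.6) x = 0}
      = {vcc - s, vcc} ∧
    {x : ℝ | hyst vcc g6 g7 s
        ((g7 * (vcc - 0.6) / g6 + 0.6) - ((g7 - 1) / g6) * s) x = 0}
      = {vcc - s, vcc} := by
  constructor
  · ext x
    simp only [Set.mem_setOf_eq, Set.mem_insert_iff, Set.mem_singleton_iff, hyst, clamp]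
    have ha : g6 * (g7 * (vcc - 0.6) / g6 + 0.6 - 0.6) - g7 * (x - 0.6)
        = g7 * (vcc - x) := by field_simp; ring
    rw [ha]
    constructor
    · intro h
      rcases le_or_gt (g7 * (vcc - x)) 0 with h1 | h1
      · rw [max_eq_right h1, min_eq_left hs.le] at h
        right; linarith
      · rcases le_or_gt s (g7 * (vcc - x)) with h2 | h2
        · rw [max_eq_left h1.le, min_eq_right h2] at h
          left; linarith
        · rw [max_eq_left h1.le, min_eq_left h2.le] at h
          have h3 : (g7 - 1) * (vcc - x) = 0 := by linarith
          rcases mul_eq_zero.mp h3 with h4 | h4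
          · linarith
          · right; linarith
    · rintro (h | h) <;> rw [h]
      · have e : g7 * (vcc - (vcc - s)) = g7 * s := by ring
        rw [e, max_eq_left (by nlinarith), min_eq_right (by nlinarith)]; ring
      · have e : g7 * (vcc - vcc) = 0 := by ring
        rw [e, max_self, min_eq_left hs.le]; ring
  · ext x
    simp only [Set.mem_setOf_eq, Set.mem_insert_iff, Set.mem_singleton_iff, hyst, clamp]
    have ha : g6 * (g7 * (vcc - 0.6) / g6 + 0.6 - (g7 - 1) / g6 * s - 0.6) - g7 * (x - 0.6)
        = g7 * (vcc - x) - (g7 - 1) * s := by field_simp; ring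
    rw [ha]
    constructor
    · intro h
      rcases le_or_gt (g7 * (vcc - x) - (g7 - 1) * s) 0 with h1 | h1
      · rw [max_eq_right h1, min_eq_left hs.le] at h
        right; linarith
      · rcases le_or_gt s (g7 * (vcc - x) - (g7 - 1) * s) with h2 | h2
        · rw [max_eq_left h1.le, min_eq_right h2] at h
          left; linarith
        · rw [max_eq_left h1.le, min_eq_left h2.le] at h
          have h3 : (g7 - 1) * (vcc - x - s) = 0 := by linarith
          rcases mul_eq_zero.mp h3 with h4 | h4
          · linarith
          · left; linarith
    · rintro (h | h) <;> rw [h]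
      · have e : g7 * (vcc - (vcc - s)) - (g7 - 1) * s = s := by ring
        rw [e, max_eq_left hs.le, min_self]; ring
      · have e : g7 * (vcc - vcc) - (g7 - 1) * s = -((g7 - 1) * s) := by ring
        rw [max_eq_right (by nlinarith), min_eq_left hs.le]; ring
end

section
/- Let vcc, g6 be real, s ≥ 0, and g7 < 1. Then for every w ∈ ℝ the map x ↦ F(w, x) is strictly monotone increasing on ℝ, and the equation F(w, x) = 0 has exactly one solution x ∈ ℝ. Consequently, if the relation F = 0 admits, for some input w, two distinct output solutions x, then necessarily g7 ≥ 1 (the paper's necessary condition for the existence of singular points of the hysteresis). -/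
lemma clamp_sub_le (s u v : ℝ) : clamp s u - clamp s v ≤ max (u - v) 0 := by
  unfold clamp
  rcases le_total u v with h | h <;>
    simp only [min_def, max_def] <;> split_ifs <;> linarith

lemma hyst_strictMono (vcc g6 g7 s w : ℝ) (hg : g7 < 1) :
    StrictMono (fun x : ℝ => hyst vcc g6 g7 s w x) := by
  intro x y hxy
  simp only [hyst]
  have h := clamp_sub_le s (g6 * (w - 0.6) - g7 * (x - 0.6))
    (g6 * (w - 0.6) - g7 * (y - 0.6))
  have h2 : max ((g6 * (w - 0.6) - g7 * (x - 0.6)) - (g6 * (w - 0.6) - g7 * (y - 0.6))) 0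
      < y - x := by
    rcases le_total g7 0 with h3 | h3
    · rw [max_eq_right (by nlinarith)]; linarith
    · rw [max_eq_left (by nlinarith)]; nlinarith
  linarith [h, h2]

lemma hyst_cont (vcc g6 g7 s w : ℝ) :
    Continuous (fun x : ℝ => hyst vcc g6 g7 s w x) := by
  unfold hyst clamp
  continuity

/-- if `g7 < 1` then for every input `w` the map `x ↦ F(w, x)` is strictly
increasing and `F(w, x) = 0` has exactly one solution; consequently, if for some input `w`
the relation `F = 0` admits two distinct output solutions, then necessarily `g7 ≥ 1`. -/
theorem stmt10 (vcc g6 s : ℝ) (hs : 0 ≤ s) :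
    (∀ g7 : ℝ, g7 < 1 → ∀ w : ℝ,
      StrictMono (fun x : ℝ => hyst vcc g6 g7 s w x) ∧
      (∃! x : ℝ, hyst vcc g6 g7 s w x = 0)) ∧
    (∀ g7 w x x' : ℝ, hyst vcc g6 g7 s w x = 0 → hyst vcc g6 g7 s w x' = 0 →
      x ≠ x' → g7 ≥ 1) := by
  have main : ∀ g7 : ℝ, g7 < 1 → ∀ w : ℝ,
      StrictMono (fun x : ℝ => hyst vcc g6 g7 s w x) ∧
      (∃! x : ℝ, hyst vcc g6 g7 s w x = 0) := by
    intro g7 hg w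
    refine ⟨hyst_strictMono vcc g6 g7 s w hg, ?_⟩
    have h1 : hyst vcc g6 g7 s w (vcc - s) ≤ 0 := by
      have := min_le_right (max (g6 * (w - 0.6) - g7 * (vcc - s - 0.6)) 0) s
      simp only [hyst, clamp]; linarith
    have h2 : 0 ≤ hyst vcc g6 g7 s w vcc := by
      have : (0:ℝ) ≤ min (max (g6 * (w - 0.6) - g7 * (vcc - 0.6)) 0) s :=
        le_min (le_max_right _ _) hs
      simp only [hyst, clamp]; linarith
    have hle : vcc - s ≤ vcc := by linarith
    obtain ⟨x, _, hx⟩ := intermediate_value_Icc hle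
      (hyst_cont vcc g6 g7 s w).continuousOn ⟨h1, h2⟩
    exact ⟨x, hx, fun y hy => (hyst_strictMono vcc g6 g7 s w hg).injective (by
      simp only [hy, hx])⟩
  refine ⟨main, fun g7 w x x' hx hx' hne => ?_⟩
  by_contra h
  push_neg at h
  exact hne ((hyst_strictMono vcc g6 g7 s w h).injective (by simp [hx, hx']))
end

section
/- Let vcc be real, g6 > 0, 0 ≤ g7 < 1 and s ≥ 0, and let ζ : ℝ → ℝ be the map assigning to each input w the unique solution x of F(w, x) = 0. Then ζ is nonincreasing and Lipschitz continuous with Lipschitz constant g6/(1 − g7) (a non-smooth implicit-function statement for the closed-loop characteristic when no singular points exist). -/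
lemma clamp_mono (s a b : ℝ) (h : b ≤ a) : clamp s b ≤ clamp s a := by
  simp only [clamp, min_def, max_def]
  split_ifs <;> linarith

lemma clamp_sub_le_s11 (s a b : ℝ) : clamp s a - clamp s b ≤ a - b ∨ a ≤ b := by
  rcases le_total a b with h | h
  · exact Or.inr h
  · left
    simp only [clamp, min_def, max_def]
    split_ifs <;> linarith

/-- when `0 ≤ g7 < 1`, the map `ζ` assigning to each input `w` the unique
solution `x` of `F(w, x) = 0` is nonincreasing and Lipschitz with constant `g6/(1 − g7)`. -/
theorem stmt11 (vcc g6 g7 s : ℝ) (hg6 : 0 < g6) (hg7₀ : 0 ≤ g7) (hg7₁ : g7 < 1)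
    (hs : 0 ≤ s) (ζ : ℝ → ℝ) (hζ : ∀ w : ℝ, hyst vcc g6 g7 s w (ζ w) = 0) :
    Antitone ζ ∧
    ∀ w w' : ℝ, |ζ w - ζ w'| ≤ (g6 / (1 - g7)) * |w - w'| := by
  have h1g7 : (0:ℝ) < 1 - g7 := by linarith
  have key : ∀ w w' : ℝ, w ≤ w' →
      ζ w' ≤ ζ w ∧ ζ w - ζ w' ≤ (g6 / (1 - g7)) * (w' - w) := by
    intro w w' hw
    set A := g6 * (w - 0.6) - g7 * (ζ w - 0.6) with hA
    set A' := g6 * (w' - 0.6) - g7 * (ζ w' - 0.6) with hA'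
    have e1 := hζ w
    have e2 := hζ w'
    simp only [hyst, ← hA, ← hA'] at e1 e2
    have heq : ζ w - ζ w' = clamp s A' - clamp s A := by linarith
    have hmono : ζ w' ≤ ζ w := by
      by_contra hc
      push_neg at hc
      rcases clamp_sub_le_s11 s A A' with h | h
      · have : A - A' = g7 * (ζ w' - ζ w) - g6 * (w' - w) := by ring
        nlinarith
      · have := clamp_mono s A' A h
        linarith
    refine ⟨hmono, ?_⟩
    rcases clamp_sub_le_s11 s A' A with h | h
    · have hAA : A' - A = g6 * (w' - w) + g7 * (ζ w - ζ w') := by ring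
      rw [div_mul_eq_mul_div, le_div_iff₀ h1g7]
      nlinarith
    · have := clamp_mono s A A' h
      have hd : ζ w - ζ w' ≤ 0 := by linarith
      have : 0 ≤ (g6 / (1 - g7)) * (w' - w) := mul_nonneg (div_pos hg6 h1g7).le (by linarith)
      linarith
  constructor
  · intro a b hab
    exact (key a b hab).1
  · intro w w'
    rcases le_total w w' with hw | hw
    · obtain ⟨h1, h2⟩ := key w w' hw
      rw [abs_of_nonneg (by linarith), abs_of_nonpos (by linarith)]
      linarith
    · obtain ⟨h1, h2⟩ := key w' w hw
      rw [abs_of_nonpos (by linarith), abs_of_nonneg (by linarith)]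
      linarith
end
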